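/- arXiv:2407.21313 — 3 statements merged into one kernel-verified Lean document; each statement's English description precedes it below -/
import Mathlib

section
/- Let n ≥ 1 and let ζ ∈ ℂ be a primitive (n+1)-th root of unity. Let σ be the ℂ-algebra automorphism of the polynomial ring ℂ[u,v] determined by σ(u) = ζ·u and σ(v) = ζ⁻¹·v. Then the subalgebra of σ-invariant polynomials {p ∈ ℂ[u,v] : σ(p) = p} equals the ℂ-subalgebra generated by the three elements u·v, u^{n+1}, and v^{n+1}. -/
open MvPolynomial

private lemma mono_rep' (a b : ℕ) (c : ℂ) :
    (monomial (Finsupp.single (0:Fin 2) a + Finsupp.single 1 b) c) = C c * X 0 ^ a * X 1 ^ b := by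
  rw [monomial_add_single]
  congr 1
  rw [X_pow_eq_monomial, ← monomial_zero', monomial_mul]
  simp

private lemma fin2_decomp (d : Fin 2 →₀ ℕ) :
    d = Finsupp.single 0 (d 0) + Finsupp.single 1 (d 1) := by
  ext i; fin_cases i <;> simp

private lemma mono_rep (d : Fin 2 →₀ ℕ) (c : ℂ) :
    monomial d c = C c * X 0 ^ d 0 * X 1 ^ d 1 := by
  conv_lhs => rw [fin2_decomp d]
  exact mono_rep' _ _ _

private lemma mono_mem (n : ℕ) (d : Fin 2 →₀ ℕ) (c : ℂ)
    (hdvd : ((n : ℤ) + 1) ∣ (d 0 : ℤ) - (d 1 : ℤ)) :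
    monomial d c ∈ Algebra.adjoin ℂ
      ({X 0 * X 1, X 0 ^ (n + 1), X 1 ^ (n + 1)} : Set (MvPolynomial (Fin 2) ℂ)) := by
  set A := Algebra.adjoin ℂ
      ({X 0 * X 1, X 0 ^ (n + 1), X 1 ^ (n + 1)} : Set (MvPolynomial (Fin 2) ℂ)) with hA
  have h1 : (X 0 * X 1 : MvPolynomial (Fin 2) ℂ) ∈ A :=
    Algebra.subset_adjoin (by simp)
  have h2 : (X 0 ^ (n+1) : MvPolynomial (Fin 2) ℂ) ∈ A :=
    Algebra.subset_adjoin (by simp)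
  have h3 : (X 1 ^ (n+1) : MvPolynomial (Fin 2) ℂ) ∈ A :=
    Algebra.subset_adjoin (by simp)
  rw [mono_rep]
  rcases le_total (d 1) (d 0) with hle | hle
  · -- d 0 = d 1 + (n+1)*k
    have : ((n:ℤ)+1) ∣ ((d 0 - d 1 : ℕ) : ℤ) := by
      rwa [Int.ofNat_sub hle]
    obtain ⟨k, hk⟩ : (n+1) ∣ (d 0 - d 1) := by exact_mod_cast this
    have hd0 : d 0 = d 1 + (n+1) * k := by omega
    have : (X 0:MvPolynomial (Fin 2) ℂ) ^ d 0 * X 1 ^ d 1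
        = (X 0 * X 1) ^ d 1 * (X 0 ^ (n+1)) ^ k := by
      rw [hd0, pow_add, pow_mul, mul_pow]; ring
    rw [mul_assoc, this]
    exact mul_mem (Subalgebra.algebraMap_mem A c)
      (mul_mem (pow_mem h1 _) (pow_mem h2 _))
  · have : ((n:ℤ)+1) ∣ ((d 1 - d 0 : ℕ) : ℤ) := by
      rw [Int.ofNat_sub hle]
      have h := dvd_neg.mpr hdvd
      rwa [neg_sub] at h
    obtain ⟨k, hk⟩ : (n+1) ∣ (d 1 - d 0) := by exact_mod_cast this
    have hd1 : d 1 = d 0 + (n+1) * k := by omega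
    have : (X 0:MvPolynomial (Fin 2) ℂ) ^ d 0 * X 1 ^ d 1
        = (X 0 * X 1) ^ d 0 * (X 1 ^ (n+1)) ^ k := by
      rw [hd1, pow_add, pow_mul, mul_pow]; ring
    rw [mul_assoc, this]
    exact mul_mem (Subalgebra.algebraMap_mem A c)
      (mul_mem (pow_mem h1 _) (pow_mem h3 _))

/-- Let `ζ` be a primitive `(n+1)`-st root of unity and `σ` the `ℂ`-algebra automorphism of
`ℂ[u, v]` with `σ(u) = ζu`, `σ(v) = ζ⁻¹v`. The algebra of `σ`-invariant polynomials is the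
`ℂ`-subalgebra generated by `u·v`, `u^(n+1)` and `v^(n+1)`. -/
theorem cyclic_invariants_generators (n : ℕ) (hn : 1 ≤ n)
    (ζ : ℂ) (hζ : IsPrimitiveRoot ζ (n + 1))
    (σ : MvPolynomial (Fin 2) ℂ ≃ₐ[ℂ] MvPolynomial (Fin 2) ℂ)
    (hu : σ (X 0) = C ζ * X 0) (hv : σ (X 1) = C ζ⁻¹ * X 1) :
    ∀ p : MvPolynomial (Fin 2) ℂ,
      σ p = p ↔
        p ∈ Algebra.adjoin ℂ
          ({X 0 * X 1, X 0 ^ (n + 1), X 1 ^ (n + 1)} : Set (MvPolynomial (Fin 2) ℂ)) := by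
  have hζ0 : ζ ≠ 0 := hζ.ne_zero (Nat.succ_ne_zero n)
  have hpow : ζ ^ (n+1) = 1 := hζ.pow_eq_one
  -- σ of a monomial
  have hmono : ∀ (d : Fin 2 →₀ ℕ) (c : ℂ),
      σ (monomial d c) = monomial d (c * (ζ ^ d 0 * ζ⁻¹ ^ d 1)) := by
    intro d c
    have hC : σ (C c) = C c := by
      have := σ.commutes c
      simpa [algebraMap_eq] using this
    rw [mono_rep, mono_rep, map_mul, map_mul, map_pow, map_pow, hu, hv, hC,
      mul_pow, mul_pow, ← C_pow, ← C_pow, C_mul, C_mul]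
    ring
  intro p
  constructor
  · intro hp
    -- every monomial of p satisfies the divisibility condition
    have key : ∀ d ∈ p.support, ((n : ℤ) + 1) ∣ (d 0 : ℤ) - (d 1 : ℤ) := by
      intro d hd
      have hc : coeff d p ≠ 0 := by rwa [MvPolynomial.mem_support_iff] at hd
      have hps : σ p = Finset.sum p.support
          (fun d => monomial d (coeff d p * (ζ ^ d 0 * ζ⁻¹ ^ d 1))) := by
        conv_lhs => rw [p.as_sum, map_sum]
        exact Finset.sum_congr rfl fun d _ => hmono d _
      have := congrArg (coeff d) (hps.symm.trans hp)
      rw [MvPolynomial.coeff_sum] at this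
      simp only [coeff_monomial] at this
      rw [Finset.sum_ite_eq' p.support d] at this
      rw [if_pos hd] at this
      have hw : ζ ^ d 0 * ζ⁻¹ ^ d 1 = 1 :=
        mul_left_cancel₀ hc (by rw [this, mul_one])
      -- from hw derive divisibility
      have : ζ ^ (((d 0 : ℤ)) - (d 1 : ℤ)) = 1 := by
        rw [zpow_sub₀ hζ0, zpow_natCast, zpow_natCast,
          div_eq_one_iff_eq (pow_ne_zero _ hζ0)]
        rw [inv_pow] at hw
        exact (mul_inv_eq_one₀ (pow_ne_zero _ hζ0)).mp hw
      exact (hζ.zpow_eq_one_iff_dvd _).mp (by exact_mod_cast this)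
    rw [p.as_sum]
    exact Subalgebra.sum_mem _ fun d hd => mono_mem n d _ (key d hd)
  · intro hp
    have hsub : Algebra.adjoin ℂ
        ({X 0 * X 1, X 0 ^ (n + 1), X 1 ^ (n + 1)} : Set (MvPolynomial (Fin 2) ℂ))
        ≤ AlgHom.equalizer (σ : MvPolynomial (Fin 2) ℂ →ₐ[ℂ] MvPolynomial (Fin 2) ℂ)
          (AlgHom.id ℂ _) := by
      apply Algebra.adjoin_le
      intro x hx
      simp only [Set.mem_insert_iff, Set.mem_singleton_iff] at hx
      have hmem : ∀ y : MvPolynomial (Fin 2) ℂ, σ y = y → y ∈ AlgHom.equalizer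
          (σ : MvPolynomial (Fin 2) ℂ →ₐ[ℂ] MvPolynomial (Fin 2) ℂ) (AlgHom.id ℂ _) := by
        intro y hy; simpa [AlgHom.mem_equalizer] using hy
      rcases hx with rfl | rfl | rfl
      · apply hmem
        rw [map_mul, hu, hv]
        rw [mul_mul_mul_comm, ← C_mul, mul_inv_cancel₀ hζ0, C_1, one_mul]
      · apply hmem
        rw [map_pow, hu, mul_pow, ← C_pow, hpow, C_1, one_mul]
      · apply hmem
        rw [map_pow, hv, mul_pow, ← C_pow, inv_pow, hpow, inv_one, C_1, one_mul]
    exact hsub hp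
end

section
/- Let n ≥ 1 and let ζ ∈ ℂ be a primitive (n+1)-th root of unity, and let σ be the ℂ-algebra automorphism of ℂ[u,v] with σ(u) = ζ·u, σ(v) = ζ⁻¹·v. Then the invariant algebra ℂ[u,v]^σ = {p : σ(p) = p} is isomorphic as a ℂ-algebra to the quotient ℂ[x,y,z]/(x·y − z^{n+1}); that is, the quotient surface ℂ²/(ℤ/(n+1)ℤ) is the Kleinian hypersurface singularity of type Aₙ. -/
/-!
Let `F = invariantsMap : ℂ[x, y, z] → ℂ[u, v]` send `x ↦ u^(n+1)`, `y ↦ v^(n+1)`, `z ↦ uv`.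
Since `σ` scales the monomial `u^p v^q` by `ζ^(p-q)`, an invariant polynomial involves only
monomials with `p ≡ q [MOD n+1]`, and these are exactly the images under `F` of the reduced
monomials `x^i y^j z^k` with `i j = 0`; so the range of `F` is the invariant algebra.
Modulo `xy - z^(n+1)` every monomial is congruent to a reduced one, and the linear map
`S = normalFormLinear` sending `u^p v^q` to the reduced monomial with the same image
satisfies `g ≡ S (F g)`; hence every `g ∈ ker F` lies in `(xy - z^(n+1))`.
-/

open MvPolynomial

theorem coeff_apply_of_apply_X_eq_C_mul {R ι : Type*} [CommSemiring R]
    {σ : MvPolynomial ι R →ₐ[R] MvPolynomial ι R} {w : ι → R}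
    (hσ : ∀ i, σ (X i) = C (w i) * X i) (p : MvPolynomial ι R) (d : ι →₀ ℕ) :
    coeff d (σ p) = (d.prod fun i k => w i ^ k) * coeff d p := by
  classical
  have hσ' : σ = aeval fun i => C (w i) * X i := algHom_ext fun i => by rw [hσ, aeval_X]
  induction p using MvPolynomial.induction_on' with
  | monomial e r =>
    have h : σ (monomial e r) = monomial e ((e.prod fun i k => w i ^ k) * r) := by
      rw [hσ', aeval_monomial, monomial_eq, C_mul, algebraMap_eq]
      simp only [mul_pow, Finsupp.prod_mul, ← C_pow, ← map_finsuppProd]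
      ring
    rw [h, coeff_monomial, coeff_monomial]
    split_ifs with hed
    · rw [hed]
    · rw [mul_zero]
  | add p q hp hq => rw [map_add, coeff_add, coeff_add, hp, hq, mul_add]

theorem monomial_fin_three {R : Type*} [CommSemiring R] (d : Fin 3 →₀ ℕ) (r : R) :
    monomial d r = C r * (X 0 ^ d 0 * X 1 ^ d 1 * X 2 ^ d 2) := by
  rw [monomial_eq, Finsupp.prod_fintype _ _ fun _ => pow_zero _, Fin.prod_univ_three]

theorem X_pow_mul_X_pow_eq_monomial {R : Type*} [CommSemiring R] (p q : ℕ) :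
    (X 0 ^ p * X 1 ^ q : MvPolynomial (Fin 2) R) =
      monomial (Finsupp.single 0 p + Finsupp.single 1 q) 1 := by
  rw [monomial_single_add, ← X_pow_eq_monomial]

namespace KleinianAn

variable (n : ℕ)

section CommRing

variable {R : Type*} [CommRing R]

noncomputable def invariantsMap : MvPolynomial (Fin 3) R →ₐ[R] MvPolynomial (Fin 2) R :=
  aeval ![X 0 ^ (n + 1), X 1 ^ (n + 1), X 0 * X 1]

/-- The reduced monomial `x^i y^j z^k` (`i j = 0`, by truncated subtraction) that `invariantsMap`
sends to `u^p v^q` whenever `p ≡ q [MOD n+1]`. -/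
noncomputable def normalForm (p q : ℕ) : MvPolynomial (Fin 3) R :=
  X 0 ^ ((p - q) / (n + 1)) * X 1 ^ ((q - p) / (n + 1)) * X 2 ^ min p q

noncomputable def normalFormLinear : MvPolynomial (Fin 2) R →ₗ[R] MvPolynomial (Fin 3) R :=
  (basisMonomials (Fin 2) R).constr R fun d => normalForm n (d 0) (d 1)

theorem invariantsMap_X_pow_mul (a b c : ℕ) :
    invariantsMap n (X 0 ^ a * X 1 ^ b * X 2 ^ c : MvPolynomial (Fin 3) R) =
      X 0 ^ ((n + 1) * a + c) * X 1 ^ ((n + 1) * b + c) := by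
  simp only [invariantsMap, map_mul, map_pow, aeval_X, Matrix.cons_val]
  ring

theorem normalFormLinear_monomial (d : Fin 2 →₀ ℕ) (r : R) :
    normalFormLinear n (monomial d r) = r • normalForm n (d 0) (d 1) := by
  have hd : monomial d 1 = basisMonomials (Fin 2) R d := by rw [coe_basisMonomials]
  rw [show monomial d r = r • monomial d 1 by rw [smul_monomial, smul_eq_mul, mul_one],
    map_smul, hd, normalFormLinear, Module.Basis.constr_basis]

theorem normalFormLinear_X_pow_mul (p q : ℕ) :
    normalFormLinear n (X 0 ^ p * X 1 ^ q : MvPolynomial (Fin 2) R) = normalForm n p q := by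
  rw [X_pow_mul_X_pow_eq_monomial, normalFormLinear_monomial, one_smul]
  simp

theorem normalForm_mul_add (a b c : ℕ) :
    (normalForm n ((n + 1) * a + c) ((n + 1) * b + c) : MvPolynomial (Fin 3) R) =
      X 0 ^ (a - b) * X 1 ^ (b - a) * X 2 ^ ((n + 1) * min a b + c) := by
  simp only [normalForm, Nat.add_sub_add_right, ← Nat.mul_sub, min_add_add_right,
    Nat.mul_min_mul_left, Nat.mul_div_cancel_left _ n.succ_pos]

theorem X_pow_mul_sub_normalForm_mem (a b c : ℕ) :
    X 0 ^ a * X 1 ^ b * X 2 ^ c - normalForm n ((n + 1) * a + c) ((n + 1) * b + c) ∈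
      Ideal.span {(X 0 * X 1 - X 2 ^ (n + 1) : MvPolynomial (Fin 3) R)} := by
  have hreduce (i j m : ℕ) : X 0 ^ (i + m) * X 1 ^ (j + m) * X 2 ^ c -
      X 0 ^ i * X 1 ^ j * X 2 ^ ((n + 1) * m + c) ∈
        Ideal.span {(X 0 * X 1 - X 2 ^ (n + 1) : MvPolynomial (Fin 3) R)} := by
    have h : X 0 ^ (i + m) * X 1 ^ (j + m) * X 2 ^ c -
        X 0 ^ i * X 1 ^ j * X 2 ^ ((n + 1) * m + c) =
          X 0 ^ i * X 1 ^ j * X 2 ^ c * ((X 0 * X 1) ^ m - (X 2 ^ (n + 1)) ^ m :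
            MvPolynomial (Fin 3) R) := by ring
    rw [h]
    exact Ideal.mul_mem_left _ _ (Ideal.mem_span_singleton.mpr (sub_dvd_pow_sub_pow _ _ m))
  have h := hreduce (a - b) (b - a) (min a b)
  rwa [show a - b + min a b = a by omega, show b - a + min a b = b by omega,
    ← normalForm_mul_add] at h

theorem sub_normalFormLinear_invariantsMap_mem (g : MvPolynomial (Fin 3) R) :
    g - normalFormLinear n (invariantsMap n g) ∈
      Ideal.span {(X 0 * X 1 - X 2 ^ (n + 1) : MvPolynomial (Fin 3) R)} := by
  induction g using MvPolynomial.induction_on' with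
  | monomial d r =>
    rw [monomial_fin_three, ← smul_eq_C_mul, map_smul, map_smul, ← smul_sub, smul_eq_C_mul,
      invariantsMap_X_pow_mul, normalFormLinear_X_pow_mul]
    exact Ideal.mul_mem_left _ _ (X_pow_mul_sub_normalForm_mem n _ _ _)
  | add p q hp hq =>
    rw [map_add, map_add, add_sub_add_comm]
    exact add_mem hp hq

theorem ker_invariantsMap :
    RingHom.ker (invariantsMap (R := R) n) = Ideal.span {X 0 * X 1 - X 2 ^ (n + 1)} := by
  refine le_antisymm (fun g hg => ?_) ?_
  · simpa [RingHom.mem_ker.mp hg] using sub_normalFormLinear_invariantsMap_mem n g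
  · rw [Ideal.span_le, Set.singleton_subset_iff, SetLike.mem_coe, RingHom.mem_ker]
    simp only [invariantsMap, map_sub, map_mul, map_pow, aeval_X, Matrix.cons_val]
    ring

theorem invariantsMap_normalForm {p q : ℕ} (h : p ≡ q [MOD n + 1]) :
    invariantsMap n (normalForm n p q : MvPolynomial (Fin 3) R) = X 0 ^ p * X 1 ^ q := by
  rw [normalForm, invariantsMap_X_pow_mul, Nat.mul_div_cancel' h.symm.dvd',
    Nat.mul_div_cancel' h.dvd']
  congr 2 <;> omega

theorem invariantsMap_normalFormLinear {p : MvPolynomial (Fin 2) R}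
    (hp : ∀ d ∈ p.support, d 0 ≡ d 1 [MOD n + 1]) :
    invariantsMap n (normalFormLinear n p) = p := by
  nth_rewrite 1 [p.as_sum]
  conv_rhs => rw [p.as_sum]
  rw [map_sum, map_sum]
  refine Finset.sum_congr rfl fun d hd => ?_
  rw [normalFormLinear_monomial, map_smul, invariantsMap_normalForm n (hp d hd),
    monomial_fin_two, smul_eq_C_mul, mul_assoc]

end CommRing

section Field

variable {K : Type*} [Field K] {ζ : K} {σ : MvPolynomial (Fin 2) K →ₐ[K] MvPolynomial (Fin 2) K}

theorem modEq_of_mem_support (hζ : IsPrimitiveRoot ζ (n + 1))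
    (hu : σ (X 0) = C ζ * X 0) (hv : σ (X 1) = C ζ⁻¹ * X 1)
    {p : MvPolynomial (Fin 2) K} (hp : σ p = p) {d : Fin 2 →₀ ℕ} (hd : d ∈ p.support) :
    d 0 ≡ d 1 [MOD n + 1] := by
  have hcoeff := coeff_apply_of_apply_X_eq_C_mul (w := ![ζ, ζ⁻¹])
    (Fin.forall_fin_two.mpr ⟨hu, hv⟩) p d
  rw [hp, eq_comm, mul_eq_right₀ (mem_support_iff.mp hd),
    Finsupp.prod_fintype _ _ fun _ => pow_zero _, Fin.prod_univ_two] at hcoeff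
  have hpow : ζ ^ d 0 = ζ ^ d 1 := by
    simpa [inv_pow, mul_inv_eq_one₀ (pow_ne_zero _ (hζ.ne_zero n.succ_ne_zero))] using hcoeff
  rwa [(hζ.isOfFinOrder n.succ_ne_zero).pow_eq_pow_iff_modEq, ← hζ.eq_orderOf] at hpow

theorem apply_invariantsMap (hζ : ζ ^ (n + 1) = 1)
    (hu : σ (X 0) = C ζ * X 0) (hv : σ (X 1) = C ζ⁻¹ * X 1) (g : MvPolynomial (Fin 3) K) :
    σ (invariantsMap n g) = invariantsMap n g := by
  have hζ0 : ζ ≠ 0 := by rintro rfl; simp at hζ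
  suffices σ.comp (invariantsMap n) = invariantsMap n from AlgHom.congr_fun this g
  refine algHom_ext fun i => ?_
  fin_cases i
  · simp [invariantsMap, hu, mul_pow, ← C_pow, hζ]
  · simp [invariantsMap, hv, mul_pow, ← C_pow, hζ]
  · simp only [invariantsMap, Fin.reduceFinMk, AlgHom.coe_comp, Function.comp_apply, aeval_X,
      Matrix.cons_val, map_mul, hu, hv]
    rw [mul_mul_mul_comm, ← C_mul, mul_inv_cancel₀ hζ0, C_1, one_mul]

theorem range_invariantsMap (hζ : IsPrimitiveRoot ζ (n + 1))
    (hu : σ (X 0) = C ζ * X 0) (hv : σ (X 1) = C ζ⁻¹ * X 1) :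
    (invariantsMap n).range = AlgHom.equalizer σ (AlgHom.id K _) := by
  ext p
  rw [AlgHom.mem_range, AlgHom.mem_equalizer, AlgHom.id_apply]
  constructor
  · rintro ⟨g, rfl⟩
    exact apply_invariantsMap n hζ.pow_eq_one hu hv g
  · intro hp
    exact ⟨normalFormLinear n p,
      invariantsMap_normalFormLinear n fun d hd => modEq_of_mem_support n hζ hu hv hp hd⟩

end Field

end KleinianAn

open KleinianAn in
theorem cyclic_invariants_iso_An_general (n : ℕ)
    (ζ : ℂ) (hζ : IsPrimitiveRoot ζ (n + 1))
    (σ : MvPolynomial (Fin 2) ℂ ≃ₐ[ℂ] MvPolynomial (Fin 2) ℂ)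
    (hu : σ (X 0) = C ζ * X 0) (hv : σ (X 1) = C ζ⁻¹ * X 1) :
    Nonempty
      ((AlgHom.equalizer σ.toAlgHom (AlgHom.id ℂ (MvPolynomial (Fin 2) ℂ))) ≃ₐ[ℂ]
        (MvPolynomial (Fin 3) ℂ ⧸
          Ideal.span ({X 0 * X 1 - X 2 ^ (n + 1)} : Set (MvPolynomial (Fin 3) ℂ)))) :=
  ⟨((Ideal.quotientEquivAlgOfEq ℂ (ker_invariantsMap n)).symm.trans
    ((Ideal.quotientKerEquivRange (invariantsMap n)).trans
      (Subalgebra.equivOfEq _ _ (range_invariantsMap n hζ hu hv)))).symm⟩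

/-- Let `ζ` be a primitive `(n+1)`-st root of unity and `σ` the `ℂ`-algebra automorphism of
`ℂ[u, v]` with `σ(u) = ζu`, `σ(v) = ζ⁻¹v`. The invariant algebra `ℂ[u, v]^σ` is isomorphic
as a `ℂ`-algebra to `ℂ[x, y, z]/(x·y − z^(n+1))`: the quotient `ℂ²/(ℤ/(n+1)ℤ)` is the
Kleinian hypersurface singularity of type `Aₙ`. -/
theorem cyclic_invariants_iso_An (n : ℕ) (hn : 1 ≤ n)
    (ζ : ℂ) (hζ : IsPrimitiveRoot ζ (n + 1))
    (σ : MvPolynomial (Fin 2) ℂ ≃ₐ[ℂ] MvPolynomial (Fin 2) ℂ)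
    (hu : σ (X 0) = C ζ * X 0) (hv : σ (X 1) = C ζ⁻¹ * X 1) :
    Nonempty
      ((AlgHom.equalizer σ.toAlgHom (AlgHom.id ℂ (MvPolynomial (Fin 2) ℂ))) ≃ₐ[ℂ]
        (MvPolynomial (Fin 3) ℂ ⧸
          Ideal.span ({X 0 * X 1 - X 2 ^ (n + 1)} : Set (MvPolynomial (Fin 3) ℂ)))) :=
  cyclic_invariants_iso_An_general n ζ hζ σ hu hv
end

section
/- Let m ≥ 2 and let ζ ∈ ℂ be a primitive 2m-th root of unity. Let σ and τ be the ℂ-algebra automorphisms of ℂ[u,v] determined by σ(u) = ζ·u, σ(v) = ζ⁻¹·v and τ(u) = v, τ(v) = −u. Then the subalgebra of polynomials invariant under both σ and τ, {p ∈ ℂ[u,v] : σ(p) = p and τ(p) = p}, equals the ℂ-subalgebra generated by the three elements u²·v², u^{2m} + v^{2m}, and u·v·(u^{2m} − v^{2m}). -/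
open MvPolynomial


private lemma monomial_fin2 (d : Fin 2 →₀ ℕ) (c : ℂ) :
    (monomial d) c = C c * X 0 ^ (d 0) * X 1 ^ (d 1) := by
  rw [monomial_eq, Finsupp.prod_fintype _ _ (fun i => pow_zero _), Fin.prod_univ_two, mul_assoc]

private def sw (d : Fin 2 →₀ ℕ) : Fin 2 →₀ ℕ := Finsupp.equivMapDomain (Equiv.swap 0 1) d

private lemma sw_apply0 (d : Fin 2 →₀ ℕ) : sw d 0 = d 1 := by
  simp [sw, Finsupp.equivMapDomain_apply, Equiv.symm_swap, Equiv.swap_apply_left]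

private lemma sw_apply1 (d : Fin 2 →₀ ℕ) : sw d 1 = d 0 := by
  simp [sw, Finsupp.equivMapDomain_apply, Equiv.symm_swap, Equiv.swap_apply_right]

private lemma sw_sw (d : Fin 2 →₀ ℕ) : sw (sw d) = d := by
  ext a
  match a with
  | 0 => rw [sw_apply0, sw_apply1]
  | 1 => rw [sw_apply1, sw_apply0]

section
variable (ζ : ℂ) (σ τ : MvPolynomial (Fin 2) ℂ ≃ₐ[ℂ] MvPolynomial (Fin 2) ℂ)
  (hσu : σ (X 0) = C ζ * X 0) (hσv : σ (X 1) = C ζ⁻¹ * X 1)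
  (hτu : τ (X 0) = X 1) (hτv : τ (X 1) = -X 0)

include hσu hσv in
private lemma sigma_monomial (d : Fin 2 →₀ ℕ) (c : ℂ) :
    σ ((monomial d) c) = (monomial d) (ζ ^ (d 0) * (ζ⁻¹) ^ (d 1) * c) := by
  rw [monomial_fin2, monomial_fin2, map_mul, map_mul, map_pow, map_pow, hσu, hσv,
    show σ (C c) = C c from σ.commutes c, mul_pow, mul_pow, ← C_pow, ← C_pow, map_mul, map_mul]
  ring

include hτu hτv in
private lemma tau_monomial (d : Fin 2 →₀ ℕ) (c : ℂ) :
    τ ((monomial d) c) = (monomial (sw d)) ((-1 : ℂ) ^ (d 1) * c) := by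
  rw [monomial_fin2, monomial_fin2, map_mul, map_mul, map_pow, map_pow, hτu, hτv,
    show τ (C c) = C c from τ.commutes c, sw_apply0, sw_apply1, neg_pow,
    map_mul, show (C ((-1:ℂ)^(d 1)) : MvPolynomial (Fin 2) ℂ) = (-1)^(d 1) by
      rw [C_pow, map_neg, map_one]]
  ring

include hσu hσv in
private lemma coeff_sigma (p : MvPolynomial (Fin 2) ℂ) (d : Fin 2 →₀ ℕ) :
    coeff d (σ p) = ζ ^ (d 0) * (ζ⁻¹) ^ (d 1) * coeff d p := by
  conv_lhs => rw [p.as_sum, map_sum]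
  rw [coeff_sum]
  simp_rw [sigma_monomial ζ σ hσu hσv, coeff_monomial]
  rw [Finset.sum_ite_eq' p.support d (fun v => ζ ^ (v 0) * (ζ⁻¹) ^ (v 1) * coeff v p)]
  split_ifs with h
  · rfl
  · rw [MvPolynomial.notMem_support_iff.mp h, mul_zero]

include hτu hτv in
private lemma coeff_tau (p : MvPolynomial (Fin 2) ℂ) (d : Fin 2 →₀ ℕ) :
    coeff d (τ p) = (-1 : ℂ) ^ (d 0) * coeff (sw d) p := by
  conv_lhs => rw [p.as_sum, map_sum]
  rw [coeff_sum]
  simp_rw [tau_monomial τ hτu hτv, coeff_monomial]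
  have hcond : ∀ v : Fin 2 →₀ ℕ, (sw v = d) = (v = sw d) := fun v =>
    propext ⟨fun h => by rw [← h, sw_sw], fun h => by rw [h, sw_sw]⟩
  simp_rw [hcond]
  rw [Finset.sum_ite_eq' p.support (sw d) (fun v => (-1:ℂ) ^ (v 1) * coeff v p)]
  split_ifs with h
  · rw [sw_apply1]
  · rw [MvPolynomial.notMem_support_iff.mp h, mul_zero]

end

private lemma SD_mem (m k : ℕ) :
    (X 0 ^ (2*m*k) + X 1 ^ (2*m*k) ∈ Algebra.adjoin ℂ
        ({X 0 ^ 2 * X 1 ^ 2, X 0 ^ (2 * m) + X 1 ^ (2 * m),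
          X 0 * X 1 * (X 0 ^ (2 * m) - X 1 ^ (2 * m))} : Set (MvPolynomial (Fin 2) ℂ))) ∧
    (X 0 * X 1 * (X 0 ^ (2*m*k) - X 1 ^ (2*m*k)) ∈ Algebra.adjoin ℂ
        ({X 0 ^ 2 * X 1 ^ 2, X 0 ^ (2 * m) + X 1 ^ (2 * m),
          X 0 * X 1 * (X 0 ^ (2 * m) - X 1 ^ (2 * m))} : Set (MvPolynomial (Fin 2) ℂ))) := by
  set T := Algebra.adjoin ℂ
      ({X 0 ^ 2 * X 1 ^ 2, X 0 ^ (2 * m) + X 1 ^ (2 * m),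
        X 0 * X 1 * (X 0 ^ (2 * m) - X 1 ^ (2 * m))} : Set (MvPolynomial (Fin 2) ℂ)) with hT
  have hA : (X 0 ^ 2 * X 1 ^ 2 : MvPolynomial (Fin 2) ℂ) ∈ T :=
    Algebra.subset_adjoin (Set.mem_insert _ _)
  have hB : (X 0 ^ (2*m) + X 1 ^ (2*m) : MvPolynomial (Fin 2) ℂ) ∈ T :=
    Algebra.subset_adjoin (Set.mem_insert_of_mem _ (Set.mem_insert _ _))
  have hC : (X 0 * X 1 * (X 0 ^ (2*m) - X 1 ^ (2*m)) : MvPolynomial (Fin 2) ℂ) ∈ T :=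
    Algebra.subset_adjoin (Set.mem_insert_of_mem _ (Set.mem_insert_of_mem _ rfl))
  suffices h : ∀ j : ℕ,
      ((X 0 ^ (2*m*j) + X 1 ^ (2*m*j) ∈ T) ∧
        (X 0 * X 1 * (X 0 ^ (2*m*j) - X 1 ^ (2*m*j)) ∈ T)) ∧
      ((X 0 ^ (2*m*(j+1)) + X 1 ^ (2*m*(j+1)) ∈ T) ∧
        (X 0 * X 1 * (X 0 ^ (2*m*(j+1)) - X 1 ^ (2*m*(j+1))) ∈ T)) from (h k).1
  intro j
  induction j with
  | zero =>
    refine ⟨⟨?_, ?_⟩, ?_, ?_⟩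
    · rw [Nat.mul_zero, pow_zero, pow_zero]
      exact add_mem (one_mem T) (one_mem T)
    · rw [Nat.mul_zero, pow_zero, pow_zero, sub_self, mul_zero]
      exact zero_mem T
    · simpa using hB
    · simpa using hC
  | succ j ih =>
    refine ⟨ih.2, ?_, ?_⟩
    · have hid : (X 0 : MvPolynomial (Fin 2) ℂ) ^ (2*m*(j+1+1)) + X 1 ^ (2*m*(j+1+1))
          = (X 0^(2*m) + X 1^(2*m)) * (X 0^(2*m*(j+1)) + X 1^(2*m*(j+1)))
            - (X 0^2*X 1^2)^m * (X 0^(2*m*j) + X 1^(2*m*j)) := by ring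
      rw [hid]
      exact sub_mem (mul_mem hB ih.2.1) (mul_mem (pow_mem hA m) ih.1.1)
    · have hid : (X 0 : MvPolynomial (Fin 2) ℂ) * X 1 * (X 0 ^ (2*m*(j+1+1)) - X 1 ^ (2*m*(j+1+1)))
          = (X 0^(2*m) + X 1^(2*m)) * (X 0 * X 1 * (X 0^(2*m*(j+1)) - X 1^(2*m*(j+1))))
            - (X 0^2*X 1^2)^m * (X 0 * X 1 * (X 0^(2*m*j) - X 1^(2*m*j))) := by ring
      rw [hid]
      exact sub_mem (mul_mem hB ih.2.2) (mul_mem (pow_mem hA m) ih.1.2)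

/-- Let `m ≥ 2`, let `ζ` be a primitive `2m`-th root of unity, and let `σ`, `τ` be the
`ℂ`-algebra automorphisms of `ℂ[u, v]` with `σ(u) = ζu`, `σ(v) = ζ⁻¹v`, `τ(u) = v`,
`τ(v) = −u` (the binary dihedral group action). The algebra of polynomials invariant
under both `σ` and `τ` is the `ℂ`-subalgebra generated by `u²v²`, `u^(2m) + v^(2m)` and
`u·v·(u^(2m) − v^(2m))`. -/
theorem binary_dihedral_invariants_generators (m : ℕ) (hm : 2 ≤ m)
    (ζ : ℂ) (hζ : IsPrimitiveRoot ζ (2 * m))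
    (σ τ : MvPolynomial (Fin 2) ℂ ≃ₐ[ℂ] MvPolynomial (Fin 2) ℂ)
    (hσu : σ (X 0) = C ζ * X 0) (hσv : σ (X 1) = C ζ⁻¹ * X 1)
    (hτu : τ (X 0) = X 1) (hτv : τ (X 1) = -X 0) :
    ∀ p : MvPolynomial (Fin 2) ℂ,
      (σ p = p ∧ τ p = p) ↔
        p ∈ Algebra.adjoin ℂ
          ({X 0 ^ 2 * X 1 ^ 2, X 0 ^ (2 * m) + X 1 ^ (2 * m),
            X 0 * X 1 * (X 0 ^ (2 * m) - X 1 ^ (2 * m))} : Set (MvPolynomial (Fin 2) ℂ)) := by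
  have hζ0 : ζ ≠ 0 := hζ.ne_zero (by omega)
  have hζ2m : ζ ^ (2 * m) = 1 := hζ.pow_eq_one
  have hζi2m : (ζ⁻¹) ^ (2 * m) = 1 := by rw [inv_pow, hζ2m, inv_one]
  have hCC : (C ζ * C ζ⁻¹ : MvPolynomial (Fin 2) ℂ) = 1 := by
    rw [← map_mul, mul_inv_cancel₀ hζ0, map_one]
  intro p
  constructor
  · rintro ⟨hσp, hτp⟩
    set T := Algebra.adjoin ℂ
        ({X 0 ^ 2 * X 1 ^ 2, X 0 ^ (2 * m) + X 1 ^ (2 * m),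
          X 0 * X 1 * (X 0 ^ (2 * m) - X 1 ^ (2 * m))} : Set (MvPolynomial (Fin 2) ℂ)) with hT
    have hA : (X 0 ^ 2 * X 1 ^ 2 : MvPolynomial (Fin 2) ℂ) ∈ T :=
      Algebra.subset_adjoin (Set.mem_insert _ _)
    have hCmem : ∀ c : ℂ, (C c : MvPolynomial (Fin 2) ℂ) ∈ T := fun c => by
      rw [← MvPolynomial.algebraMap_eq]; exact T.algebraMap_mem c
    have main : ∀ n : ℕ, ∀ q : MvPolynomial (Fin 2) ℂ, q.support.card ≤ n →
        σ q = q → τ q = q → q ∈ T := by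
      intro n
      induction n with
      | zero =>
        intro q hq _ _
        rw [MvPolynomial.support_eq_empty.mp (Finset.card_eq_zero.mp (Nat.le_zero.mp hq))]
        exact zero_mem T
      | succ n ih =>
        intro q hq hσq hτq
        by_cases h0 : q = 0
        · rw [h0]; exact zero_mem T
        obtain ⟨d₀, hd₀⟩ := MvPolynomial.support_nonempty.mpr h0
        have hco : ∀ e : Fin 2 →₀ ℕ, coeff e q = (-1:ℂ)^(e 0) * coeff (sw e) q := by
          intro e
          conv_lhs => rw [← hτq]
          exact coeff_tau τ hτu hτv q e
        have hswmem : ∀ e, e ∈ q.support → sw e ∈ q.support := by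
          intro e he
          rw [MvPolynomial.mem_support_iff] at he ⊢
          intro h
          exact he (by rw [hco e, h, mul_zero])
        obtain ⟨d, hd, hdge⟩ : ∃ d ∈ q.support, d 1 ≤ d 0 := by
          rcases le_total (d₀ 1) (d₀ 0) with h | h
          · exact ⟨d₀, hd₀, h⟩
          · refine ⟨sw d₀, hswmem _ hd₀, ?_⟩
            rw [sw_apply0, sw_apply1]; exact h
        have hcne : coeff d q ≠ 0 := MvPolynomial.mem_support_iff.mp hd
        have hw : ζ^(d 0) * (ζ⁻¹)^(d 1) * coeff d q = coeff d q := by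
          rw [← coeff_sigma ζ σ hσu hσv q d, hσq]
        have hw1 : ζ^(d 0) * (ζ⁻¹)^(d 1) = 1 :=
          mul_right_cancel₀ hcne (by rw [hw, one_mul])
        have hpow : ζ^(d 0) = ζ^(d 1) := by
          rw [inv_pow] at hw1
          exact (mul_inv_eq_one₀ (pow_ne_zero _ hζ0)).mp hw1
        have hdvd : 2*m ∣ d 0 - d 1 := by
          apply (hζ.pow_eq_one_iff_dvd _).mp
          have h3 : ζ^(d 1) * ζ^(d 0 - d 1) = ζ^(d 1) * 1 := by
            rw [← pow_add, mul_one, ← hpow]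
            congr 1
            omega
          exact mul_left_cancel₀ (pow_ne_zero _ hζ0) h3
        obtain ⟨k, hk⟩ := hdvd
        have hk' : d 0 = d 1 + 2*m*k := by omega
        obtain ⟨g, hgmem, hσg, hτg, hcd, hcsw, hrest⟩ :
            ∃ g, g ∈ T ∧ σ g = g ∧ τ g = g ∧ coeff d (q - g) = 0 ∧
              coeff (sw d) (q - g) = 0 ∧ ∀ e, e ≠ d → e ≠ sw d → coeff e g = 0 := by
          by_cases hk0 : k = 0
          · -- diagonal case
            have hdd : d 0 = d 1 := by subst hk0; simpa using hk'
            have hswd : sw d = d := by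
              ext a
              match a with
              | 0 => rw [sw_apply0, hdd]
              | 1 => rw [sw_apply1, hdd]
            have hneg1 : (-1:ℂ)^(d 0) = 1 := by
              have h4 := hco d
              rw [hswd] at h4
              exact mul_right_cancel₀ hcne (by rw [← h4, one_mul])
            have heven : Even (d 0) := (neg_one_pow_eq_one_iff_even (by norm_num)).mp hneg1
            obtain ⟨t, ht⟩ := id heven
            refine ⟨(monomial d) (coeff d q), ?_, ?_, ?_, ?_, ?_, ?_⟩
            · rw [monomial_fin2, show d 0 = 2*t by omega, show d 1 = 2*t by omega,
                show (C (coeff d q) : MvPolynomial (Fin 2) ℂ) * X 0^(2*t) * X 1^(2*t)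
                  = C (coeff d q) * (X 0^2*X 1^2)^t by ring]
              exact mul_mem (hCmem _) (pow_mem hA t)
            · rw [sigma_monomial ζ σ hσu hσv, hw1, one_mul]
            · rw [tau_monomial τ hτu hτv, hswd, show ((-1:ℂ))^(d 1) = 1 by rw [← hdd]; exact hneg1,
                one_mul]
            · rw [MvPolynomial.coeff_sub, coeff_monomial, if_pos rfl, sub_self]
            · rw [hswd, MvPolynomial.coeff_sub, coeff_monomial, if_pos rfl, sub_self]
            · intro e he _
              rw [coeff_monomial, if_neg (fun h => he h.symm)]
          · -- off-diagonal case
            have h2mk : 0 < 2*m*k := Nat.mul_pos (Nat.mul_pos (by norm_num) (by omega)) (by omega)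
            have hlt : d 1 < d 0 := by omega
            have hswne : sw d ≠ d := by
              intro h
              have h5 := sw_apply0 d
              rw [h] at h5
              omega
            have hcsw' : coeff (sw d) q = (-1:ℂ)^(d 1) * coeff d q := by
              have h4 := hco (sw d)
              rw [sw_sw, sw_apply0] at h4
              exact h4
            have hw2 : ζ^(sw d 0) * (ζ⁻¹)^(sw d 1) = 1 := by
              rw [sw_apply0, sw_apply1, inv_pow, hpow, mul_inv_cancel₀ (pow_ne_zero _ hζ0)]
            have hparity : (-1:ℂ)^(d 0) * ((-1:ℂ)^(d 1) * coeff d q) = coeff d q := by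
              rw [← mul_assoc, ← pow_add,
                Even.neg_one_pow (⟨d 1 + m*k, by rw [hk']; ring⟩ : Even (d 0 + d 1)), one_mul]
            refine ⟨(monomial d) (coeff d q) + (monomial (sw d)) ((-1:ℂ)^(d 1) * coeff d q),
              ?_, ?_, ?_, ?_, ?_, ?_⟩
            · rcases Nat.even_or_odd (d 1) with hpar | hpar
              · obtain ⟨t, ht⟩ := hpar
                rw [monomial_fin2, monomial_fin2, sw_apply0, sw_apply1,
                  show d 0 = 2*t + 2*m*k by omega, show d 1 = 2*t by omega,
                  show ((-1:ℂ))^(2*t) = 1 from Even.neg_one_pow ⟨t, by omega⟩, one_mul,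
                  show (C (coeff d q) : MvPolynomial (Fin 2) ℂ) * X 0^(2*t+2*m*k) * X 1^(2*t)
                      + C (coeff d q) * X 0^(2*t) * X 1^(2*t+2*m*k)
                    = C (coeff d q) * ((X 0^2*X 1^2)^t * (X 0^(2*m*k) + X 1^(2*m*k))) by ring]
                exact mul_mem (hCmem _) (mul_mem (pow_mem hA t) (SD_mem m k).1)
              · obtain ⟨t, ht⟩ := hpar
                rw [monomial_fin2, monomial_fin2, sw_apply0, sw_apply1,
                  show d 0 = 2*t+1 + 2*m*k by omega, show d 1 = 2*t+1 by omega,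
                  show ((-1:ℂ))^(2*t+1) = -1 from Odd.neg_one_pow ⟨t, by omega⟩,
                  show (-1 : ℂ) * coeff d q = -(coeff d q) by ring, map_neg,
                  show (C (coeff d q) : MvPolynomial (Fin 2) ℂ) * X 0^(2*t+1+2*m*k) * X 1^(2*t+1)
                      + -(C (coeff d q)) * X 0^(2*t+1) * X 1^(2*t+1+2*m*k)
                    = C (coeff d q) * ((X 0^2*X 1^2)^t
                        * (X 0 * X 1 * (X 0^(2*m*k) - X 1^(2*m*k)))) by ring]
                exact mul_mem (hCmem _) (mul_mem (pow_mem hA t) (SD_mem m k).2)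
            · rw [map_add, sigma_monomial ζ σ hσu hσv, sigma_monomial ζ σ hσu hσv, hw1, one_mul,
                hw2, one_mul]
            · rw [map_add, tau_monomial τ hτu hτv, tau_monomial τ hτu hτv, sw_sw, sw_apply1,
                hparity, add_comm]
            · rw [MvPolynomial.coeff_sub, MvPolynomial.coeff_add, coeff_monomial, coeff_monomial,
                if_pos rfl, if_neg hswne, add_zero, sub_self]
            · rw [MvPolynomial.coeff_sub, MvPolynomial.coeff_add, coeff_monomial, coeff_monomial,
                if_neg (fun h => hswne h.symm), if_pos rfl, zero_add, hcsw', sub_self]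
            · intro e he1 he2
              rw [MvPolynomial.coeff_add, coeff_monomial, coeff_monomial,
                if_neg (fun h => he1 h.symm), if_neg (fun h => he2 h.symm), add_zero]
        have hsub : (q - g).support ⊆ q.support.erase d := by
          intro e he
          rw [Finset.mem_erase, MvPolynomial.mem_support_iff]
          rw [MvPolynomial.mem_support_iff] at he
          have hed : e ≠ d := by rintro rfl; exact he hcd
          have hesw : e ≠ sw d := by rintro rfl; exact he hcsw
          refine ⟨hed, fun h => he ?_⟩
          rw [MvPolynomial.coeff_sub, h, hrest e hed hesw, sub_self]
        have hcard : (q - g).support.card ≤ n := by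
          have h1 := Finset.card_le_card hsub
          rw [Finset.card_erase_of_mem hd] at h1
          omega
        have hmem2 : q - g ∈ T :=
          ih (q - g) hcard (by rw [map_sub, hσq, hσg]) (by rw [map_sub, hτq, hτg])
        have hqeq : q = (q - g) + g := by ring
        rw [hqeq]
        exact add_mem hmem2 hgmem
    exact main p.support.card p le_rfl hσp hτp
  · -- backward direction
    intro hp
    have hfix : Algebra.adjoin ℂ
        ({X 0 ^ 2 * X 1 ^ 2, X 0 ^ (2 * m) + X 1 ^ (2 * m),
          X 0 * X 1 * (X 0 ^ (2 * m) - X 1 ^ (2 * m))} : Set (MvPolynomial (Fin 2) ℂ)) ≤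
        AlgHom.equalizer σ.toAlgHom (AlgHom.id ℂ _) ⊓
        AlgHom.equalizer τ.toAlgHom (AlgHom.id ℂ _) := by
      apply Algebra.adjoin_le
      rintro x hx
      simp only [Set.mem_insert_iff, Set.mem_singleton_iff] at hx
      have hmem : ∀ y : MvPolynomial (Fin 2) ℂ, σ y = y → τ y = y →
          y ∈ (AlgHom.equalizer σ.toAlgHom (AlgHom.id ℂ _) ⊓
            AlgHom.equalizer τ.toAlgHom (AlgHom.id ℂ _) :
              Subalgebra ℂ (MvPolynomial (Fin 2) ℂ)) := by
        intro y h1 h2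
        refine ⟨?_, ?_⟩ <;> simp [AlgHom.mem_equalizer, h1, h2]
      rcases hx with rfl | rfl | rfl
      · refine hmem _ ?_ ?_
        · rw [map_mul, map_pow, map_pow, hσu, hσv, mul_pow, mul_pow, ← C_pow, ← C_pow]
          rw [show (C (ζ^2) : MvPolynomial (Fin 2) ℂ) * X 0 ^2 * (C (ζ⁻¹^2) * X 1^2)
              = (C ζ * C ζ⁻¹)^2 * (X 0^2 * X 1^2) by rw [map_pow, map_pow]; ring, hCC]
          ring
        · rw [map_mul, map_pow, map_pow, hτu, hτv]
          ring
      · refine hmem _ ?_ ?_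
        · rw [map_add, map_pow, map_pow, hσu, hσv, mul_pow, mul_pow, ← C_pow, ← C_pow,
            hζ2m, hζi2m, map_one, one_mul, one_mul]
        · rw [map_add, map_pow, map_pow, hτu, hτv, Even.neg_pow (even_two_mul m), add_comm]
      · refine hmem _ ?_ ?_
        · rw [map_mul, map_mul, map_sub, map_pow, map_pow, hσu, hσv, mul_pow, mul_pow,
            ← C_pow, ← C_pow, hζ2m, hζi2m, map_one, one_mul, one_mul]
          linear_combination (X 0 * X 1 * ((X 0:MvPolynomial (Fin 2) ℂ) ^ (2*m) - X 1 ^ (2*m))) * hCC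
        · rw [map_mul, map_mul, map_sub, map_pow, map_pow, hτu, hτv,
            Even.neg_pow (even_two_mul m)]
          ring
    have h := hfix hp
    rw [Algebra.mem_inf, AlgHom.mem_equalizer, AlgHom.mem_equalizer] at h
    exact ⟨by simpa using h.1, by simpa using h.2⟩
end
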